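/- The subspace S = span{ x^{𝒩 + s n} y^{ℳ − s m} : s = 0, 1, …, r } with r = min_k ⌊ℳ_k / m_k⌋ is invariant under the operator H_1 = y^m ∂_x^n + x^n ∂_y^m, provided 𝒩_{l'} < n_{l'} for at least one index l'. -/

import Mathlib

/-!
`H₁` sends `x^a y^b` to `(∏ₗ (aₗ)_{nₗ}) x^{a-n} y^{b+m} + (∏ₖ (bₖ)_{mₖ}) x^{a+n} y^{b-m}`, with
falling factorials `(a)_n`. On the monomials `x^{𝒩+sn} y^{ℳ-sm}` the first term moves `s` to
`s - 1` and the second to `s + 1`. Leaving the range `0 ≤ s ≤ r` is only possible at its two ends,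
and there the falling factorial vanishes: at `s = 0` because `𝒩_{l'} < n_{l'}`, at `s = r` because
`ℳₖ - r mₖ = ℳₖ mod mₖ < mₖ` for an index `k` attaining the minimum defining `r`.
-/

open MvPolynomial

noncomputable def Dxn {N M : ℕ} (n : Fin N → ℕ) :
    Module.End ℝ (MvPolynomial (Fin N ⊕ Fin M) ℝ) :=
  (List.ofFn fun l : Fin N =>
    ((pderiv (Sum.inl l)).toLinearMap : Module.End ℝ (MvPolynomial (Fin N ⊕ Fin M) ℝ)) ^ n l).prod

noncomputable def Dym {N M : ℕ} (m : Fin M → ℕ) :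
    Module.End ℝ (MvPolynomial (Fin N ⊕ Fin M) ℝ) :=
  (List.ofFn fun k : Fin M =>
    ((pderiv (Sum.inr k)).toLinearMap : Module.End ℝ (MvPolynomial (Fin N ⊕ Fin M) ℝ)) ^ m k).prod

/-- `H₁ = y^m ∂_x^n + x^n ∂_y^m`. -/
noncomputable def H1 {N M : ℕ} (n : Fin N → ℕ) (m : Fin M → ℕ) :
    Module.End ℝ (MvPolynomial (Fin N ⊕ Fin M) ℝ) :=
  (LinearMap.mulLeft ℝ (∏ k : Fin M, X (Sum.inr k) ^ m k)).comp (Dxn n) +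
    (LinearMap.mulLeft ℝ (∏ l : Fin N, X (Sum.inl l) ^ n l)).comp (Dym m)

/-- The monomial `x^i y^j`. -/
noncomputable def mon {N M : ℕ} (i : Fin N → ℕ) (j : Fin M → ℕ) :
    MvPolynomial (Fin N ⊕ Fin M) ℝ :=
  monomial (Finsupp.equivFunOnFinite.symm (Sum.elim i j)) 1

section pderiv

variable {R σ : Type*} [CommSemiring R]

theorem pderiv_pow_monomial (i : σ) (k : ℕ) (s : σ →₀ ℕ) (a : R) :
    ((pderiv i).toLinearMap ^ k : Module.End R (MvPolynomial σ R)) (monomial s a) =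
      monomial (s - Finsupp.single i k) (a * (s i).descFactorial k) := by
  induction k with
  | zero => simp
  | succ k ih =>
    rw [pow_succ', Module.End.mul_apply, ih, Derivation.coeFn_coe, pderiv_monomial, tsub_tsub,
      ← Finsupp.single_add, Finsupp.tsub_apply, Finsupp.single_eq_same, Nat.descFactorial_succ,
      mul_assoc, Nat.cast_mul, mul_comm ((s i - k : ℕ) : R)]

theorem ofFn_prod_pderiv_pow_monomial [DecidableEq σ] {k : ℕ} (v : Fin k → σ)
    (hv : Function.Injective v) (c : Fin k → ℕ) (s : σ →₀ ℕ) (a : R) :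
    (List.ofFn fun j => ((pderiv (v j)).toLinearMap ^ c j : Module.End R (MvPolynomial σ R))).prod
        (monomial s a) =
      monomial (s - ∑ j, Finsupp.single (v j) (c j))
        (a * ∏ j, ((s (v j)).descFactorial (c j) : R)) := by
  induction k generalizing s a with
  | zero => simp
  | succ k ih =>
    have hfresh : (∑ j : Fin k, Finsupp.single (v j.succ) (c j.succ)) (v 0) = 0 := by
      simp [Finsupp.finsetSum_apply, hv.eq_iff, Fin.succ_ne_zero]
    rw [List.ofFn_succ, List.prod_cons, Module.End.mul_apply,
      ih (fun j => v j.succ) (hv.comp (Fin.succ_injective k)), pderiv_pow_monomial,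
      Fin.sum_univ_succ, Fin.prod_univ_succ, tsub_tsub, add_comm (Finsupp.single _ _)]
    simp only [Finsupp.tsub_apply, hfresh, tsub_zero, mul_assoc, mul_comm (∏ _, _)]

end pderiv

section monomials

variable {N M : ℕ}

theorem mon_mul (i i' : Fin N → ℕ) (j j' : Fin M → ℕ) :
    mon i j * mon i' j' = mon (i + i') (j + j') := by
  rw [mon, mon, mon, monomial_mul, one_mul]
  exact congrArg (monomial · 1) (Finsupp.ext fun a => by cases a <;> rfl)

theorem prod_X_inl_pow_eq_mon (n : Fin N → ℕ) :
    ∏ l, (X (Sum.inl l) : MvPolynomial (Fin N ⊕ Fin M) ℝ) ^ n l = mon n 0 := by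
  simp only [X_pow_eq_monomial, ← monomial_sum_one, mon]
  refine congrArg (monomial · 1) (Finsupp.ext ?_)
  rintro (l | k) <;> simp [Finsupp.finsetSum_apply, Finsupp.single_apply]

theorem prod_X_inr_pow_eq_mon (m : Fin M → ℕ) :
    ∏ k, (X (Sum.inr k) : MvPolynomial (Fin N ⊕ Fin M) ℝ) ^ m k = mon 0 m := by
  simp only [X_pow_eq_monomial, ← monomial_sum_one, mon]
  refine congrArg (monomial · 1) (Finsupp.ext ?_)
  rintro (l | k) <;> simp [Finsupp.finsetSum_apply, Finsupp.single_apply]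

theorem Dxn_mon (n i : Fin N → ℕ) (j : Fin M → ℕ) :
    Dxn n (mon i j) = (∏ l, ((i l).descFactorial (n l) : ℝ)) • mon (i - n) j := by
  rw [Dxn, mon, ofFn_prod_pderiv_pow_monomial _ Sum.inl_injective, mon, smul_monomial,
    smul_eq_mul, mul_one, one_mul]
  refine congrArg (monomial · _) (Finsupp.ext ?_)
  rintro (l | k) <;> simp [Finsupp.single_apply]

theorem Dym_mon (m : Fin M → ℕ) (i : Fin N → ℕ) (j : Fin M → ℕ) :
    Dym m (mon i j) = (∏ k, ((j k).descFactorial (m k) : ℝ)) • mon i (j - m) := by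
  rw [Dym, mon, ofFn_prod_pderiv_pow_monomial _ Sum.inr_injective, mon, smul_monomial,
    smul_eq_mul, mul_one, one_mul]
  refine congrArg (monomial · _) (Finsupp.ext ?_)
  rintro (l | k) <;> simp [Finsupp.single_apply]

theorem H1_mon (n : Fin N → ℕ) (m : Fin M → ℕ) (i : Fin N → ℕ) (j : Fin M → ℕ) :
    H1 n m (mon i j) =
      (∏ l, ((i l).descFactorial (n l) : ℝ)) • mon (i - n) (j + m) +
        (∏ k, ((j k).descFactorial (m k) : ℝ)) • mon (i + n) (j - m) := by
  rw [H1, LinearMap.add_apply, LinearMap.comp_apply, LinearMap.comp_apply, Dxn_mon, Dym_mon,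
    LinearMap.mulLeft_apply, LinearMap.mulLeft_apply, prod_X_inl_pow_eq_mon,
    prod_X_inr_pow_eq_mon, mul_smul_comm, mul_smul_comm, mon_mul, mon_mul, zero_add, zero_add,
    add_comm m, add_comm n]

end monomials

theorem Finset.inf'_div_mul_le {ι : Type*} {s : Finset ι} (hs : s.Nonempty) (a b : ι → ℕ)
    {i : ι} (hi : i ∈ s) : s.inf' hs (fun i => a i / b i) * b i ≤ a i :=
  (Nat.mul_le_mul_right _ (Finset.inf'_le _ hi)).trans (Nat.div_mul_le_self _ _)

theorem Finset.exists_sub_inf'_div_mul_lt {ι : Type*} {s : Finset ι} (hs : s.Nonempty)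
    (a b : ι → ℕ) (hb : ∀ i ∈ s, 0 < b i) :
    ∃ i ∈ s, a i - s.inf' hs (fun i => a i / b i) * b i < b i := by
  obtain ⟨i, hi, hmin⟩ := Finset.exists_mem_eq_inf' hs fun i => a i / b i
  exact ⟨i, hi, by rw [hmin, ← Nat.mod_eq_sub_div_mul]; exact Nat.mod_lt _ (hb i hi)⟩

section ladder

variable {N M : ℕ} (n 𝒩 : Fin N → ℕ) (m ℳ : Fin M → ℕ) (r : ℕ)

noncomputable def ladderSpan : Submodule ℝ (MvPolynomial (Fin N ⊕ Fin M) ℝ) :=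
  Submodule.span ℝ {f | ∃ s ≤ r, f = mon (fun l => 𝒩 l + s * n l) fun k => ℳ k - s * m k}

theorem mon_mem_ladderSpan {s : ℕ} (hs : s ≤ r) :
    mon (fun l => 𝒩 l + s * n l) (fun k => ℳ k - s * m k) ∈ ladderSpan n 𝒩 m ℳ r :=
  Submodule.subset_span ⟨s, hs, rfl⟩

variable {n 𝒩 m ℳ r}

theorem lowered_mon_smul_mem_ladderSpan (hlow : ∃ l, 𝒩 l < n l) {s : ℕ} (hs : s ≤ r)
    (hsm : ∀ k, s * m k ≤ ℳ k) :
    (∏ l, ((𝒩 l + s * n l).descFactorial (n l) : ℝ)) •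
      mon ((fun l => 𝒩 l + s * n l) - n) ((fun k => ℳ k - s * m k) + m) ∈
        ladderSpan n 𝒩 m ℳ r := by
  rcases s with _ | t
  · obtain ⟨l, hl⟩ := hlow
    rw [Finset.prod_eq_zero (Finset.mem_univ l) (by simpa [Nat.descFactorial_eq_zero_iff_lt]),
      zero_smul]
    exact zero_mem _
  · refine Submodule.smul_mem _ _ ?_
    convert mon_mem_ladderSpan n 𝒩 m ℳ r (s := t) (by omega) using 2 <;> funext i
    · simp only [Pi.sub_apply, Nat.succ_mul]
      omega
    · have := hsm i
      simp only [Pi.add_apply, Nat.succ_mul] at this ⊢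
      omega

theorem raised_mon_smul_mem_ladderSpan (htop : ∃ k, ℳ k - r * m k < m k) {s : ℕ} (hs : s ≤ r) :
    (∏ k, ((ℳ k - s * m k).descFactorial (m k) : ℝ)) •
      mon ((fun l => 𝒩 l + s * n l) + n) ((fun k => ℳ k - s * m k) - m) ∈
        ladderSpan n 𝒩 m ℳ r := by
  rcases hs.eq_or_lt with rfl | hlt
  · obtain ⟨k, hk⟩ := htop
    rw [Finset.prod_eq_zero (Finset.mem_univ k) (by simpa [Nat.descFactorial_eq_zero_iff_lt]),
      zero_smul]
    exact zero_mem _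
  · refine Submodule.smul_mem _ _ ?_
    convert mon_mem_ladderSpan n 𝒩 m ℳ r hlt using 2 <;> funext i
    · simp only [Pi.add_apply, Nat.succ_mul, add_assoc]
    · simp only [Pi.sub_apply, Nat.succ_mul, tsub_tsub]

end ladder

theorem span_invariant_under_H1_general {N M : ℕ} (hM : 1 ≤ M)
    (n : Fin N → ℕ) (m : Fin M → ℕ) (hm : ∀ k, 0 < m k)
    (𝒩 : Fin N → ℕ) (ℳ : Fin M → ℕ) (hrestr : ∃ l', 𝒩 l' < n l')
    (r : ℕ) (hr : r = Finset.univ.inf' ⟨⟨0, hM⟩, Finset.mem_univ _⟩ fun k => ℳ k / m k) :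
    ∀ f ∈ Submodule.span ℝ
        {f : MvPolynomial (Fin N ⊕ Fin M) ℝ | ∃ s ≤ r,
          f = mon (fun l => 𝒩 l + s * n l) fun k => ℳ k - s * m k},
      H1 n m f ∈ Submodule.span ℝ
        {f : MvPolynomial (Fin N ⊕ Fin M) ℝ | ∃ s ≤ r,
          f = mon (fun l => 𝒩 l + s * n l) fun k => ℳ k - s * m k} := by
  have hbelow : ∀ k, r * m k ≤ ℳ k := fun k =>
    hr ▸ Finset.inf'_div_mul_le _ ℳ m (Finset.mem_univ k)
  have htop : ∃ k, ℳ k - r * m k < m k := by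
    obtain ⟨k, -, hk⟩ := Finset.exists_sub_inf'_div_mul_lt _ ℳ m fun k _ => hm k
    exact ⟨k, hr ▸ hk⟩
  suffices ladderSpan n 𝒩 m ℳ r ≤ (ladderSpan n 𝒩 m ℳ r).comap (H1 n m) from fun f hf => this hf
  refine Submodule.span_le.2 ?_
  rintro _ ⟨s, hs, rfl⟩
  rw [SetLike.mem_coe, Submodule.mem_comap, H1_mon]
  exact add_mem
    (lowered_mon_smul_mem_ladderSpan hrestr hs fun k =>
      (Nat.mul_le_mul_right _ hs).trans (hbelow k))
    (raised_mon_smul_mem_ladderSpan htop hs)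

/-- the span of the monomials `x^{𝒩 + s n} y^{ℳ - s m}`, `0 ≤ s ≤ r`, with
`r = min_k ⌊ℳ_k / m_k⌋`, is invariant under `H₁`, provided `𝒩_{l'} < n_{l'}` for some `l'`. -/
theorem span_invariant_under_H1 {N M : ℕ} (hN : 1 ≤ N) (hM : 1 ≤ M)
    (n : Fin N → ℕ) (m : Fin M → ℕ) (hn : ∀ l, 0 < n l) (hm : ∀ k, 0 < m k)
    (𝒩 : Fin N → ℕ) (ℳ : Fin M → ℕ) (hrestr : ∃ l', 𝒩 l' < n l')
    (r : ℕ) (hr : r = Finset.univ.inf' ⟨⟨0, hM⟩, Finset.mem_univ _⟩ fun k => ℳ k / m k) :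
    ∀ f ∈ Submodule.span ℝ
        {f : MvPolynomial (Fin N ⊕ Fin M) ℝ | ∃ s ≤ r,
          f = mon (fun l => 𝒩 l + s * n l) fun k => ℳ k - s * m k},
      H1 n m f ∈ Submodule.span ℝ
        {f : MvPolynomial (Fin N ⊕ Fin M) ℝ | ∃ s ≤ r,
          f = mon (fun l => 𝒩 l + s * n l) fun k => ℳ k - s * m k} :=
  span_invariant_under_H1_general hM n m hm 𝒩 ℳ hrestr r hr
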